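/- Fix V = 0, δ = 0, and 0 < A_− ≤ A_+, set λ_±(k) = λ(k; A_±), and define the reflection coefficient of the pure two-sided step initial condition ρ(k) = (iA_+/(λ_+(k) + k)) · ((λ_+(k) + k)·A_− − (λ_−(k) + k)·A_+) / ((λ_+(k) − k)·A_− + (λ_−(k) + k)·A_+) for k ∈ ℝ. Then: (i) if A_+ = A_−, ρ(k) = 0 for every k ∈ ℝ (the reflection coefficient vanishes identically); (ii) if A_+ ≠ A_−, then for k ∈ ℝ one has ρ(k) = 0 if and only if k = 0. Moreover, the denominator (λ_+(k) − k)·A_− + (λ_−(k) + k)·A_+ is nonzero for every k ∈ ℂ with Im k > 0 not lying on the segment i[−A_+, A_+] (no discrete eigenvalues). -/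

import Mathlib

/-!
Everything follows from `λ(k;A)² = k² + A²` by eliminating the square roots. If the numerator
`(λ₊ + k)A₋ − (λ₋ + k)A₊` vanishes, multiplying it by `(λ₊ − k)(λ₋ − k)` gives
`(λ₋ − k)A₊ = (λ₊ − k)A₋`, and adding the two relations gives `2k(A₋ − A₊) = 0`. If the
denominator `(λ₊ − k)A₋ + (λ₋ + k)A₊` vanishes at `k ≠ 0`, the same manipulation gives
`λ₊ + λ₋ = 0` and hence `A₊² = A₋²`; then `A₊ = A₋` and `λ₊ = λ₋ = 0`, so `k = ±iA₊` lies on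
the cut.
-/

/-- The argument of a complex number normalized to lie in `[−π/2, 3π/2)`:
if `arg z ∈ (−π, −π/2)` we add `2π`. -/
noncomputable def argS (z : ℂ) : ℝ :=
  if Complex.arg z < -(Real.pi / 2) then Complex.arg z + 2 * Real.pi else Complex.arg z

/-- The branch `λ(k;A) = √(r₁r₂)·exp(i(φ₁+φ₂)/2)` of `(k² + A²)^{1/2}`, where
`k − iA = r₁e^{iφ₁}`, `k + iA = r₂e^{iφ₂}` with `φ₁, φ₂ ∈ [−π/2, 3π/2)`;
its branch cut lies along the segment `i[−A,A]` and it is continuous from the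
right on the cut. -/
noncomputable def lamBr (A : ℝ) (k : ℂ) : ℂ :=
  ((Real.sqrt (‖k - Complex.I * (A : ℂ)‖ * ‖k + Complex.I * (A : ℂ)‖) : ℝ) : ℂ) *
    Complex.exp (Complex.I *
      (((argS (k - Complex.I * (A : ℂ)) + argS (k + Complex.I * (A : ℂ))) / 2 : ℝ) : ℂ))

/-- The reflection coefficient of the pure two-sided step initial condition with
`V = 0`, `δ = 0`:
`ρ(k) = (iA₊/(λ₊+k))·((λ₊+k)A₋ − (λ₋+k)A₊)/((λ₊−k)A₋ + (λ₋+k)A₊)` with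
`λ± = λ(k;A±)`. -/
noncomputable def rhoStep (Am Ap : ℝ) (k : ℂ) : ℂ :=
  (Complex.I * (Ap : ℂ) / (lamBr Ap k + k)) *
    ((lamBr Ap k + k) * (Am : ℂ) - (lamBr Am k + k) * (Ap : ℂ)) /
    ((lamBr Ap k - k) * (Am : ℂ) + (lamBr Am k + k) * (Ap : ℂ))

open Complex

theorem norm_mul_exp_argS (z : ℂ) : (‖z‖ : ℂ) * exp (I * argS z) = z := by
  have h2π : exp (I * (2 * Real.pi : ℝ)) = 1 := by
    rw [mul_comm]; exact_mod_cast exp_two_pi_mul_I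
  unfold argS
  split_ifs
  · rw [ofReal_add, mul_add, exp_add, h2π, mul_one, mul_comm I]
    exact norm_mul_exp_arg_mul_I z
  · rw [mul_comm I]
    exact norm_mul_exp_arg_mul_I z

theorem lamBr_sq (A : ℝ) (k : ℂ) : lamBr A k ^ 2 = k ^ 2 + (A : ℂ) ^ 2 := by
  set z₁ := k - I * A
  set z₂ := k + I * A
  have hsqrt : ((Real.sqrt (‖z₁‖ * ‖z₂‖) : ℝ) : ℂ) ^ 2 = (‖z₁‖ : ℂ) * ‖z₂‖ := by
    norm_cast
    exact Real.sq_sqrt (by positivity)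
  have hexp : exp (I * (((argS z₁ + argS z₂) / 2 : ℝ) : ℂ)) ^ 2
      = exp (I * argS z₁) * exp (I * argS z₂) := by
    rw [← exp_nat_mul, ← exp_add]
    push_cast
    ring_nf
  calc lamBr A k ^ 2
      = ((‖z₁‖ : ℂ) * exp (I * argS z₁)) * ((‖z₂‖ : ℂ) * exp (I * argS z₂)) := by
        rw [lamBr, mul_pow, hsqrt, hexp]; ring
    _ = z₁ * z₂ := by rw [norm_mul_exp_argS, norm_mul_exp_argS]
    _ = k ^ 2 + (A : ℂ) ^ 2 := by linear_combination (-(A : ℂ) ^ 2) * I_sq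

theorem argS_I_mul {A : ℝ} (hA : 0 < A) : argS (I * A) = Real.pi / 2 := by
  have : ¬ Real.pi / 2 < -(Real.pi / 2) := by linarith [Real.pi_pos]
  rw [argS, mul_comm, arg_real_mul _ hA, arg_I, if_neg this]

theorem argS_neg_I_mul {A : ℝ} (hA : 0 < A) : argS (-(I * A)) = -(Real.pi / 2) := by
  rw [argS, ← neg_mul, mul_comm, arg_real_mul _ hA, arg_neg_I, if_neg (lt_irrefl _)]

theorem lamBr_zero {A : ℝ} (hA : 0 < A) : lamBr A 0 = A := by
  have hnorm : ‖I * (A : ℂ)‖ = A := by simp [abs_of_pos hA]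
  rw [lamBr, zero_sub, zero_add, norm_neg, hnorm, argS_I_mul hA, argS_neg_I_mul hA,
    Real.sqrt_mul_self hA.le]
  simp

theorem lamBr_add_self_ne_zero {A : ℝ} (hA : A ≠ 0) (k : ℂ) : lamBr A k + k ≠ 0 := by
  intro h
  have : (A : ℂ) ^ 2 = 0 := by linear_combination (lamBr A k - k) * h - lamBr_sq A k
  exact hA (by exact_mod_cast pow_eq_zero_iff two_ne_zero |>.mp this)

theorem re_eq_zero_and_abs_im_eq_of_lamBr_eq_zero {A : ℝ} {k : ℂ} (h : lamBr A k = 0) :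
    k.re = 0 ∧ |k.im| = |A| := by
  have hprod : (k - I * A) * (k + I * A) = 0 := by
    linear_combination lamBr A k * h - lamBr_sq A k - (A : ℂ) ^ 2 * I_sq
  rcases mul_eq_zero.mp hprod with hk | hk
  · rw [sub_eq_zero.mp hk]; simp
  · rw [eq_neg_of_add_eq_zero_left hk]; simp

section Elimination

variable {K : Type*} [CommRing K] [IsDomain K] [NeZero (2 : K)] {Lp Lm k ap am : K}

theorem eq_zero_of_step_numerator_eq_zero (hLp : Lp ^ 2 = k ^ 2 + ap ^ 2)
    (hLm : Lm ^ 2 = k ^ 2 + am ^ 2) (hap : ap ≠ 0) (ham : am ≠ 0) (hne : ap ≠ am)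
    (hN : (Lp + k) * am - (Lm + k) * ap = 0) : k = 0 := by
  have hconj : (ap * am) * (ap * (Lm - k) - am * (Lp - k)) = 0 := by
    linear_combination (Lp - k) * (Lm - k) * hN - am * (Lm - k) * hLp + ap * (Lp - k) * hLm
  have hconj' := (mul_eq_zero.mp hconj).resolve_left (mul_ne_zero hap ham)
  have h2k : (2 * k) * (am - ap) = 0 := by linear_combination hN + hconj'
  exact (mul_eq_zero.mp ((mul_eq_zero.mp h2k).resolve_right (sub_ne_zero.mpr hne.symm))).resolve_left
    two_ne_zero

theorem sq_eq_sq_and_add_eq_zero_of_step_denominator_eq_zero (hLp : Lp ^ 2 = k ^ 2 + ap ^ 2)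
    (hLm : Lm ^ 2 = k ^ 2 + am ^ 2) (hap : ap ≠ 0) (ham : am ≠ 0) (hk : k ≠ 0)
    (hD : (Lp - k) * am + (Lm + k) * ap = 0) : ap ^ 2 = am ^ 2 ∧ Lp + Lm = 0 := by
  have hplus : ap * ((Lm + k) * (Lp + k) + ap * am) = 0 := by
    linear_combination (Lp + k) * hD - am * hLp
  have hminus : am * ((Lp - k) * (Lm - k) + ap * am) = 0 := by
    linear_combination (Lm - k) * hD - ap * hLm
  have h2k : (2 * k) * (Lp + Lm) = 0 := by
    linear_combination (mul_eq_zero.mp hplus).resolve_left hap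
      - (mul_eq_zero.mp hminus).resolve_left ham
  have hsum := (mul_eq_zero.mp h2k).resolve_left (mul_ne_zero two_ne_zero hk)
  exact ⟨by linear_combination hLm - hLp + (Lp - Lm) * hsum, hsum⟩

end Elimination

theorem eq_of_step_denominator_eq_zero {Am Ap : ℝ} (hm : 0 < Am) (hp : 0 < Ap) {k : ℂ}
    (hk : k ≠ 0) (hD : (lamBr Ap k - k) * (Am : ℂ) + (lamBr Am k + k) * (Ap : ℂ) = 0) :
    Ap = Am ∧ lamBr Ap k = 0 := by
  obtain ⟨hsq, hsum⟩ := sq_eq_sq_and_add_eq_zero_of_step_denominator_eq_zero (lamBr_sq Ap k)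
    (lamBr_sq Am k) (ofReal_ne_zero.mpr hp.ne') (ofReal_ne_zero.mpr hm.ne') hk hD
  have hA : Ap = Am := (sq_eq_sq₀ hp.le hm.le).mp (by exact_mod_cast hsq)
  subst hA
  exact ⟨rfl, (mul_eq_zero.mp (by linear_combination hsum : (2 : ℂ) * lamBr Ap k = 0)).resolve_left
    two_ne_zero⟩

theorem rhoStep_self (A : ℝ) (k : ℂ) : rhoStep A A k = 0 := by
  simp [rhoStep]

theorem rhoStep_eq_zero_iff {Am Ap : ℝ} (hm : 0 < Am) (hp : 0 < Ap) (hne : Ap ≠ Am) (k : ℂ) :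
    rhoStep Am Ap k = 0 ↔ k = 0 := by
  constructor
  · intro hρ
    by_contra hk
    have hApC : (Ap : ℂ) ≠ 0 := ofReal_ne_zero.mpr hp.ne'
    rcases div_eq_zero_iff.mp hρ with hρ | hD
    · rcases mul_eq_zero.mp hρ with hρ | hN
      · exact div_ne_zero (mul_ne_zero I_ne_zero hApC) (lamBr_add_self_ne_zero hp.ne' k) hρ
      · exact hk (eq_zero_of_step_numerator_eq_zero (lamBr_sq Ap k) (lamBr_sq Am k) hApC
          (ofReal_ne_zero.mpr hm.ne') (ofReal_injective.ne hne) hN)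
    · exact hne (eq_of_step_denominator_eq_zero hm hp hk hD).1
  · rintro rfl
    simp [rhoStep, lamBr_zero hp, lamBr_zero hm, mul_comm]

theorem step_denominator_ne_zero {Am Ap : ℝ} (hm : 0 < Am) (hp : 0 < Ap) {k : ℂ}
    (him : 0 < k.im) (hcut : ¬(k.re = 0 ∧ |k.im| ≤ Ap)) :
    (lamBr Ap k - k) * (Am : ℂ) + (lamBr Am k + k) * (Ap : ℂ) ≠ 0 := by
  intro hD
  have hk : k ≠ 0 := by rintro rfl; simp at him
  obtain ⟨hre, him_eq⟩ :=
    re_eq_zero_and_abs_im_eq_of_lamBr_eq_zero (eq_of_step_denominator_eq_zero hm hp hk hD).2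
  exact hcut ⟨hre, (him_eq.trans (abs_of_pos hp)).le⟩

/-- For `V = 0`, `δ = 0`, `0 < A₋ ≤ A₊`: (i) if `A₊ = A₋` then `ρ(k) = 0` for every
real `k`; (ii) if `A₊ ≠ A₋` then for real `k`, `ρ(k) = 0` iff `k = 0`.  Moreover the
denominator `(λ₊(k)−k)A₋ + (λ₋(k)+k)A₊` is nonzero for every `k` in the open upper
half plane not lying on `i[−A₊, A₊]` (no discrete eigenvalues). -/
theorem step_reflection_zero_velocity (Am Ap : ℝ) (hm : 0 < Am) (hmp : Am ≤ Ap) :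
    (Ap = Am → ∀ k : ℝ, rhoStep Am Ap (k : ℂ) = 0) ∧
    (Ap ≠ Am → ∀ k : ℝ, (rhoStep Am Ap (k : ℂ) = 0 ↔ k = 0)) ∧
    (∀ k : ℂ, 0 < k.im → ¬(k.re = 0 ∧ |k.im| ≤ Ap) →
      (lamBr Ap k - k) * (Am : ℂ) + (lamBr Am k + k) * (Ap : ℂ) ≠ 0) := by
  have hp : 0 < Ap := hm.trans_le hmp
  refine ⟨?_, fun hne k ↦ ?_, fun k him hcut ↦ step_denominator_ne_zero hm hp him hcut⟩
  · rintro rfl k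
    exact rhoStep_self Ap k
  · rw [rhoStep_eq_zero_iff hm hp hne, ofReal_eq_zero]
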